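/- arXiv:1905.07577 — 3 statements merged into one kernel-verified Lean document; each statement's English description precedes it below -/
import Mathlib

section
/- Let 𝒜 be a prime unital ∗-algebra over ℂ containing a nontrivial projection P₁, and let Φ : 𝒜 → 𝒜 be a nonlinear ⋄-derivation such that Φ(I/2) and Φ(iI/2) are self-adjoint. Then Φ is an additive ∗-derivation: Φ(A + B) = Φ(A) + Φ(B), Φ(AB) = Φ(A)B + AΦ(B), and Φ(A*) = Φ(A)* for all A, B ∈ 𝒜. -/
/-!
The right-hand side of the derivation rule is skew-adjoint, and every skew-adjoint `K` equals
`½ ⋄ K` (scalars standing for multiples of the unit), so `Φ` preserves skew-adjointness.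
Evaluating the rule at `½ ⋄ i = i` and `(i/2) ⋄ i = 0` turns the self-adjointness of `Φ(½)` and
`Φ(i/2)` into `Φ(½) = Φ(i/2) = 0`; then the rule at `½ ⋄ A = ½(A - A*)` and
`A ⋄ (i/2) = (i/2)(A* + A)` says that `Φ` commutes with taking self-adjoint and skew-adjoint
parts, hence with `*` and with multiplication by `i`.

The additivity defect `T = Φ(a + b) - Φ a - Φ b` satisfies
`C ⋄ T = Φ(C ⋄ a + C ⋄ b) - Φ(C ⋄ a) - Φ(C ⋄ b)`, so testing with `C` and `iC` gives `C* T = 0`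
whenever `C* a = 0`. In the Peirce decomposition for `P` and `Q = 1 - P` this makes `Φ` additive
on off-diagonal skew-adjoint elements, whose sum is one `⋄`-product of two factors on which `Φ`
is already additive. Primeness then kills the defect of `PaP + x` whenever `PxP = 0`, which
splits `Φ A` along the corners and the off-diagonal part of `A` and makes `Φ` additive on each
corner. So `Φ` is additive on skew-adjoint elements, hence everywhere; the Leibniz rule follows
from the rule at `A* ⋄ B` and `A* ⋄ iB`, which are the skew-adjoint part and `i` times the
self-adjoint part of `2AB`.
-/

open Complex

def diamond {R : Type*} [Ring R] [StarRing R] (A B : R) : R := star A * B - star B * A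

local infixl:70 " ⋄ " => diamond

def IsDiamondDerivation {R : Type*} [Ring R] [StarRing R] (Φ : R → R) : Prop :=
  ∀ A B, Φ (A ⋄ B) = Φ A ⋄ B + A ⋄ Φ B

def IsPrimeRing (R : Type*) [Mul R] [Zero R] : Prop :=
  ∀ a b : R, (∀ x, a * x * b = 0) → a = 0 ∨ b = 0

structure ComplementaryProjections {R : Type*} [Ring R] [StarRing R] (P Q : R) : Prop where
  isStarProjection_left : IsStarProjection P
  isStarProjection_right : IsStarProjection Q
  add_eq_one : P + Q = 1

section StarRing

variable {R : Type*} [Ring R] [StarRing R]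

theorem diamond_add_left (A A' B : R) : (A + A') ⋄ B = A ⋄ B + A' ⋄ B := by
  simp only [diamond, star_add, add_mul, mul_add]; abel

theorem diamond_add_right (A B B' : R) : A ⋄ (B + B') = A ⋄ B + A ⋄ B' := by
  simp only [diamond, star_add, add_mul, mul_add]; abel

theorem diamond_sub_right (A B B' : R) : A ⋄ (B - B') = A ⋄ B - A ⋄ B' := by
  simp only [diamond, star_sub, sub_mul, mul_sub]; abel

@[simp] theorem diamond_zero_left (B : R) : 0 ⋄ B = 0 := by simp [diamond]

@[simp] theorem diamond_zero_right (A : R) : A ⋄ 0 = 0 := by simp [diamond]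

theorem diamond_comm (A B : R) : B ⋄ A = -(A ⋄ B) := by
  simp only [diamond, neg_sub]

theorem star_diamond (A B : R) : star A ⋄ B = A * B - star (A * B) := by
  rw [diamond, star_star, star_mul]

theorem diamond_mem_skewAdjoint (A B : R) : A ⋄ B ∈ skewAdjoint R := by
  rw [skewAdjoint.mem_iff]
  simp only [diamond, star_sub, star_mul, star_star, neg_sub]

theorem diamond_eq_zero_of_star_mul_eq_zero {C b : R} (h : star C * b = 0) : C ⋄ b = 0 := by
  have h' : star b * C = star (star C * b) := by rw [star_mul, star_star]
  rw [diamond, h', h, star_zero, sub_zero]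

namespace ComplementaryProjections

variable {P Q : R}

theorem symm (h : ComplementaryProjections P Q) : ComplementaryProjections Q P :=
  ⟨h.2, h.1, by rw [add_comm, h.3]⟩

theorem of_isStarProjection (hP : IsStarProjection P) : ComplementaryProjections P (1 - P) :=
  ⟨hP, hP.one_sub, add_sub_cancel _ _⟩

theorem star_left (h : ComplementaryProjections P Q) : star P = P := h.1.2

theorem star_right (h : ComplementaryProjections P Q) : star Q = Q := h.2.2

theorem mul_eq_zero (h : ComplementaryProjections P Q) : P * Q = 0 := by
  rw [eq_sub_of_add_eq' h.3, h.1.mul_one_sub_self]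

theorem mul_add_mul_left (h : ComplementaryProjections P Q) (x : R) : P * x + Q * x = x := by
  rw [← add_mul, h.3, one_mul]

theorem mul_add_mul_right (h : ComplementaryProjections P Q) (x : R) : x * P + x * Q = x := by
  rw [← mul_add, h.3, mul_one]

-- The multiplication table of `P` and `Q`, in the right-associated form that `simp` needs.
theorem relations (h : ComplementaryProjections P Q) :
    (star P = P ∧ star Q = Q) ∧ (P * P = P ∧ Q * Q = Q ∧ P * Q = 0 ∧ Q * P = 0) ∧
    ∀ x, P * (P * x) = P * x ∧ Q * (Q * x) = Q * x ∧ P * (Q * x) = 0 ∧ Q * (P * x) = 0 := by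
  have hPQ := h.mul_eq_zero
  have hQP := h.symm.mul_eq_zero
  refine ⟨⟨h.star_left, h.star_right⟩, ⟨h.1.1, h.2.1, hPQ, hQP⟩, fun x => ⟨?_, ?_, ?_, ?_⟩⟩ <;>
    simp only [← mul_assoc, h.1.1.eq, h.2.1.eq, hPQ, hQP, zero_mul]

theorem eq_add_of_corners_eq_zero (h : ComplementaryProjections P Q) {m : R}
    (hP : P * m * P = 0) (hQ : Q * m * Q = 0) : m = P * m * Q + Q * m * P := by
  conv_lhs => rw [← h.mul_add_mul_left m, ← h.mul_add_mul_right (P * m),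
    ← h.mul_add_mul_right (Q * m)]
  rw [hP, hQ, zero_add, add_zero]

-- If `T = P T P` then `((P (star y) Q) ⋄ T) P = Q y T`, and primeness applies.
theorem eq_zero_of_forall_diamond_mul_eq_zero (h : ComplementaryProjections P Q)
    (hprime : IsPrimeRing R) (hQ : Q ≠ 0) {T : R} (hQT : Q * T = 0) (hTQ : T * Q = 0)
    (hT : ∀ y, ((P * y * Q) ⋄ T) * P = 0) : T = 0 := by
  have hPT : P * T = T := by rw [← add_zero (P * T), ← hQT, h.mul_add_mul_left]
  have hTP : T * P = T := by rw [← add_zero (T * P), ← hTQ, h.mul_add_mul_right]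
  have hQyT : ∀ y, Q * y * T = 0 := fun y => by
    simpa [diamond, star_mul, mul_sub, sub_mul, mul_assoc, h.relations, hTP, hPT] using hT (star y)
  exact (hprime Q T hQyT).resolve_left hQ

end ComplementaryProjections

namespace IsDiamondDerivation

variable {Φ : R → R}

theorem map_zero (hΦ : IsDiamondDerivation Φ) : Φ 0 = 0 := by
  simpa using hΦ 0 0

theorem map_diamond_mem_skewAdjoint (hΦ : IsDiamondDerivation Φ) (A B : R) :
    Φ (A ⋄ B) ∈ skewAdjoint R := by
  rw [hΦ]
  exact add_mem (diamond_mem_skewAdjoint _ _) (diamond_mem_skewAdjoint _ _)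

theorem map_neg_diamond (hΦ : IsDiamondDerivation Φ) (A B : R) :
    Φ (-(A ⋄ B)) = -Φ (A ⋄ B) := by
  rw [← diamond_comm, hΦ, hΦ, diamond_comm A, diamond_comm (Φ A)]
  abel

theorem diamond_map_add_sub (hΦ : IsDiamondDerivation Φ) (C a b : R) :
    C ⋄ (Φ (a + b) - Φ a - Φ b) = Φ (C ⋄ a + C ⋄ b) - Φ (C ⋄ a) - Φ (C ⋄ b) := by
  have h : ∀ w, C ⋄ Φ w = Φ (C ⋄ w) - Φ C ⋄ w := fun w => by rw [hΦ]; abel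
  rw [diamond_sub_right, diamond_sub_right, h, h, h, diamond_add_right, diamond_add_right]
  abel

theorem map_diamond_add_add (hΦ : IsDiamondDerivation Φ) {X₁ X₂ Y₁ Y₂ : R}
    (hX : Φ (X₁ + X₂) = Φ X₁ + Φ X₂) (hY : Φ (Y₁ + Y₂) = Φ Y₁ + Φ Y₂) :
    Φ ((X₁ + X₂) ⋄ (Y₁ + Y₂)) =
      Φ (X₁ ⋄ Y₁) + Φ (X₁ ⋄ Y₂) + Φ (X₂ ⋄ Y₁) + Φ (X₂ ⋄ Y₂) := by
  rw [hΦ, hX, hY, hΦ X₁ Y₁, hΦ X₁ Y₂, hΦ X₂ Y₁, hΦ X₂ Y₂]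
  simp only [diamond_add_left, diamond_add_right]
  abel

end IsDiamondDerivation

end StarRing

section ComplexStarAlgebra

variable {𝒜 : Type*} [Ring 𝒜] [StarRing 𝒜] [Algebra ℂ 𝒜] [StarModule ℂ 𝒜]

theorem isSelfAdjoint_half_smul_add_star (A : 𝒜) :
    IsSelfAdjoint ((2⁻¹ : ℂ) • (A + star A)) := by
  simp [IsSelfAdjoint, add_comm]

theorem half_smul_sub_star_mem_skewAdjoint (A : 𝒜) :
    (2⁻¹ : ℂ) • (A - star A) ∈ skewAdjoint 𝒜 := by
  simp [skewAdjoint.mem_iff, smul_sub]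

theorem half_smul_one_diamond (A : 𝒜) :
    ((2⁻¹ : ℂ) • 1 : 𝒜) ⋄ A = (2⁻¹ : ℂ) • (A - star A) := by
  simp [diamond, smul_sub]

theorem eq_half_smul_one_diamond {K : 𝒜} (hK : K ∈ skewAdjoint 𝒜) :
    K = ((2⁻¹ : ℂ) • 1 : 𝒜) ⋄ K := by
  rw [half_smul_one_diamond, skewAdjoint.mem_iff.mp hK, sub_neg_eq_add, ← two_smul ℂ, smul_smul]
  norm_num

theorem diamond_I_half_smul_one (A : 𝒜) :
    A ⋄ ((I / 2) • 1 : 𝒜) = (I / 2) • (star A + A) := by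
  simp [diamond, smul_add, sub_eq_add_neg, neg_div]

theorem I_half_smul_one_diamond_of_mem_skewAdjoint {K : 𝒜} (hK : K ∈ skewAdjoint 𝒜) :
    ((I / 2) • 1 : 𝒜) ⋄ K = 0 := by
  rw [diamond_comm, diamond_I_half_smul_one, skewAdjoint.mem_iff.mp hK, neg_add_cancel,
    smul_zero, neg_zero]

theorem diamond_I_smul_one {w : 𝒜} (hw : IsSelfAdjoint w) : w ⋄ (I • 1 : 𝒜) = (2 * I) • w := by
  simp [diamond, hw.star_eq, sub_eq_add_neg, two_mul, add_smul]

theorem star_diamond_I_smul (A B : 𝒜) : star A ⋄ (I • B) = I • (A * B + star (A * B)) := by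
  simp [diamond, smul_add, sub_eq_add_neg]

theorem star_mul_eq_zero_of_diamond_eq_zero {C T : 𝒜} (h : C ⋄ T = 0)
    (hI : (I • C) ⋄ T = 0) : star C * T = 0 := by
  have hsum : I • (star C * T + star T * C) = 0 := by
    simpa [diamond, smul_sub, smul_add, sub_eq_add_neg, ← neg_add, -neg_add_rev] using hI
  rw [smul_eq_zero_iff_right I_ne_zero] at hsum
  rw [diamond] at h
  have h2 : (2 : ℂ) • (star C * T) = 0 :=
    calc (2 : ℂ) • (star C * T) = (star C * T + star T * C) + (star C * T - star T * C) := by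
          rw [two_smul]; abel
      _ = 0 := by rw [hsum, h, add_zero]
  simpa using h2

namespace IsDiamondDerivation

variable {Φ : 𝒜 → 𝒜}

theorem map_mem_skewAdjoint (hΦ : IsDiamondDerivation Φ) {K : 𝒜} (hK : K ∈ skewAdjoint 𝒜) :
    Φ K ∈ skewAdjoint 𝒜 := by
  rw [eq_half_smul_one_diamond hK]
  exact hΦ.map_diamond_mem_skewAdjoint _ _

theorem map_neg_of_mem_skewAdjoint (hΦ : IsDiamondDerivation Φ) {K : 𝒜}
    (hK : K ∈ skewAdjoint 𝒜) : Φ (-K) = -Φ K := by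
  rw [eq_half_smul_one_diamond hK]
  exact hΦ.map_neg_diamond _ _

theorem map_half_smul_one_eq_zero (hΦ : IsDiamondDerivation Φ)
    (h : IsSelfAdjoint (Φ ((2⁻¹ : ℂ) • 1))) : Φ ((2⁻¹ : ℂ) • 1) = 0 := by
  have hI : (I • 1 : 𝒜) ∈ skewAdjoint 𝒜 :=
    (IsSelfAdjoint.one 𝒜).smul_mem_skewAdjoint I_mem_skewAdjoint
  have hrule := hΦ ((2⁻¹ : ℂ) • 1) (I • 1)
  rw [← eq_half_smul_one_diamond hI, ← eq_half_smul_one_diamond (hΦ.map_mem_skewAdjoint hI),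
    diamond_I_smul_one h] at hrule
  simpa [I_ne_zero] using hrule

theorem map_I_half_smul_one_eq_zero (hΦ : IsDiamondDerivation Φ)
    (h : IsSelfAdjoint (Φ ((I / 2) • 1))) : Φ ((I / 2) • 1) = 0 := by
  have hI : (I • 1 : 𝒜) ∈ skewAdjoint 𝒜 :=
    (IsSelfAdjoint.one 𝒜).smul_mem_skewAdjoint I_mem_skewAdjoint
  have hrule := hΦ ((I / 2) • 1) (I • 1)
  rw [I_half_smul_one_diamond_of_mem_skewAdjoint hI,
    I_half_smul_one_diamond_of_mem_skewAdjoint (hΦ.map_mem_skewAdjoint hI), hΦ.map_zero,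
    diamond_I_smul_one h, add_zero] at hrule
  simpa [I_ne_zero] using hrule.symm

theorem map_half_smul_sub_star (hΦ : IsDiamondDerivation Φ) (hω : Φ ((2⁻¹ : ℂ) • 1) = 0)
    (A : 𝒜) : Φ ((2⁻¹ : ℂ) • (A - star A)) = (2⁻¹ : ℂ) • (Φ A - star (Φ A)) := by
  rw [← half_smul_one_diamond, hΦ, hω, diamond_zero_left, zero_add, half_smul_one_diamond]

theorem map_I_half_smul_star_add (hΦ : IsDiamondDerivation Φ) (hγ : Φ ((I / 2) • 1) = 0)
    (A : 𝒜) : Φ ((I / 2) • (star A + A)) = (I / 2) • (star (Φ A) + Φ A) := by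
  rw [← diamond_I_half_smul_one, hΦ, hγ, diamond_zero_right, add_zero, diamond_I_half_smul_one]

theorem isSelfAdjoint_map (hΦ : IsDiamondDerivation Φ) (hω : Φ ((2⁻¹ : ℂ) • 1) = 0) {S : 𝒜}
    (hS : IsSelfAdjoint S) : IsSelfAdjoint (Φ S) := by
  have h := hΦ.map_half_smul_sub_star hω S
  rw [hS.star_eq, sub_self, smul_zero, hΦ.map_zero, eq_comm, smul_eq_zero, sub_eq_zero] at h
  exact (h.resolve_left (by norm_num)).symm

theorem map_I_smul_of_isSelfAdjoint (hΦ : IsDiamondDerivation Φ)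
    (hω : Φ ((2⁻¹ : ℂ) • 1) = 0) (hγ : Φ ((I / 2) • 1) = 0) {S : 𝒜} (hS : IsSelfAdjoint S) :
    Φ (I • S) = I • Φ S := by
  have h := hΦ.map_I_half_smul_star_add hγ S
  rwa [hS.star_eq, (hΦ.isSelfAdjoint_map hω hS).star_eq, ← two_smul ℂ S, ← two_smul ℂ (Φ S),
    smul_smul, smul_smul, div_mul_cancel₀ _ two_ne_zero] at h

theorem map_I_smul_of_mem_skewAdjoint (hΦ : IsDiamondDerivation Φ)
    (hω : Φ ((2⁻¹ : ℂ) • 1) = 0) (hγ : Φ ((I / 2) • 1) = 0) {K : 𝒜} (hK : K ∈ skewAdjoint 𝒜) :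
    Φ (I • K) = I • Φ K := by
  have h := hΦ.map_I_smul_of_isSelfAdjoint hω hγ
    (isSelfAdjoint_smul_of_mem_skewAdjoint I_mem_skewAdjoint hK)
  rw [smul_smul, I_mul_I, neg_one_smul, hΦ.map_neg_of_mem_skewAdjoint hK] at h
  simpa [smul_smul] using (congrArg (I • ·) h).symm

theorem map_half_smul_add_star (hΦ : IsDiamondDerivation Φ)
    (hω : Φ ((2⁻¹ : ℂ) • 1) = 0) (hγ : Φ ((I / 2) • 1) = 0) (A : 𝒜) :
    Φ ((2⁻¹ : ℂ) • (A + star A)) = (2⁻¹ : ℂ) • (Φ A + star (Φ A)) := by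
  have h := hΦ.map_I_half_smul_star_add hγ A
  rw [div_eq_mul_inv, ← smul_smul, ← smul_smul, add_comm (star A), add_comm (star (Φ A)),
    hΦ.map_I_smul_of_isSelfAdjoint hω hγ (isSelfAdjoint_half_smul_add_star A)] at h
  exact smul_right_injective 𝒜 I_ne_zero h

theorem map_eq_map_half_add_star_add_map_half_sub_star (hΦ : IsDiamondDerivation Φ)
    (hω : Φ ((2⁻¹ : ℂ) • 1) = 0) (hγ : Φ ((I / 2) • 1) = 0) (A : 𝒜) :
    Φ A = Φ ((2⁻¹ : ℂ) • (A + star A)) + Φ ((2⁻¹ : ℂ) • (A - star A)) := by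
  rw [hΦ.map_half_smul_add_star hω hγ, hΦ.map_half_smul_sub_star hω]
  module

theorem map_add_of_isSelfAdjoint_of_mem_skewAdjoint (hΦ : IsDiamondDerivation Φ)
    (hω : Φ ((2⁻¹ : ℂ) • 1) = 0) (hγ : Φ ((I / 2) • 1) = 0) {S K : 𝒜} (hS : IsSelfAdjoint S)
    (hK : K ∈ skewAdjoint 𝒜) : Φ (S + K) = Φ S + Φ K := by
  rw [hΦ.map_eq_map_half_add_star_add_map_half_sub_star hω hγ, star_add, hS.star_eq,
    skewAdjoint.mem_iff.mp hK]
  congr 2 <;> module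

theorem map_I_smul (hΦ : IsDiamondDerivation Φ) (hω : Φ ((2⁻¹ : ℂ) • 1) = 0)
    (hγ : Φ ((I / 2) • 1) = 0) (A : 𝒜) : Φ (I • A) = I • Φ A := by
  set S := (2⁻¹ : ℂ) • (A + star A)
  set K := (2⁻¹ : ℂ) • (A - star A)
  have hS : IsSelfAdjoint S := isSelfAdjoint_half_smul_add_star A
  have hK : K ∈ skewAdjoint 𝒜 := half_smul_sub_star_mem_skewAdjoint A
  have hA : A = S + K := by simp only [S, K]; module
  rw [hA, smul_add, add_comm, hΦ.map_add_of_isSelfAdjoint_of_mem_skewAdjoint hω hγ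
    (isSelfAdjoint_smul_of_mem_skewAdjoint I_mem_skewAdjoint hK)
    (hS.smul_mem_skewAdjoint I_mem_skewAdjoint),
    hΦ.map_add_of_isSelfAdjoint_of_mem_skewAdjoint hω hγ hS hK,
    hΦ.map_I_smul_of_isSelfAdjoint hω hγ hS, hΦ.map_I_smul_of_mem_skewAdjoint hω hγ hK, smul_add,
    add_comm]

theorem map_star (hΦ : IsDiamondDerivation Φ) (hω : Φ ((2⁻¹ : ℂ) • 1) = 0)
    (hγ : Φ ((I / 2) • 1) = 0) (A : 𝒜) : Φ (star A) = star (Φ A) := by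
  have hK := half_smul_sub_star_mem_skewAdjoint A
  have hA' : (2⁻¹ : ℂ) • (star A - star (star A)) = -((2⁻¹ : ℂ) • (A - star A)) := by
    rw [star_star]; module
  rw [hΦ.map_eq_map_half_add_star_add_map_half_sub_star hω hγ (star A), hA', star_star,
    add_comm (star A), hΦ.map_neg_of_mem_skewAdjoint hK,
    hΦ.map_eq_map_half_add_star_add_map_half_sub_star hω hγ A, star_add,
    (hΦ.isSelfAdjoint_map hω (isSelfAdjoint_half_smul_add_star A)).star_eq,
    skewAdjoint.mem_iff.mp (hΦ.map_mem_skewAdjoint hK)]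

theorem star_mul_map_add_sub_eq_zero (hΦ : IsDiamondDerivation Φ) {C a : 𝒜} (b : 𝒜)
    (h : star C * a = 0) : star C * (Φ (a + b) - Φ a - Φ b) = 0 := by
  apply star_mul_eq_zero_of_diamond_eq_zero <;>
    simp [hΦ.diamond_map_add_sub, diamond_eq_zero_of_star_mul_eq_zero, h, hΦ.map_zero]

theorem map_add_sub_mul_eq_zero (hΦ : IsDiamondDerivation Φ)
    (hstar : ∀ A, Φ (star A) = star (Φ A)) {C a : 𝒜} (b : 𝒜) (h : a * C = 0) :
    (Φ (a + b) - Φ a - Φ b) * C = 0 := by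
  apply star_injective
  have h' : star C * star a = 0 := by rw [← star_mul, h, star_zero]
  simpa [star_mul, ← hstar] using hΦ.star_mul_map_add_sub_eq_zero (star b) h'

variable {P Q : 𝒜}

theorem map_add_of_mul_eq_zero (hΦ : IsDiamondDerivation Φ) (h : ComplementaryProjections P Q)
    {a b : 𝒜} (ha : Q * a = 0) (hb : P * b = 0) : Φ (a + b) = Φ a + Φ b := by
  have hQT := hΦ.star_mul_map_add_sub_eq_zero b (C := Q) (by rwa [h.star_right])
  have hPT := hΦ.star_mul_map_add_sub_eq_zero a (C := P) (by rwa [h.star_left])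
  rw [h.star_left, add_comm b, sub_right_comm] at hPT
  rw [h.star_right] at hQT
  rw [← sub_eq_zero, sub_add_eq_sub_sub, ← h.mul_add_mul_left (_ - _ - _), hPT, hQT, add_zero]

theorem map_add_of_corners_eq_zero (hΦ : IsDiamondDerivation Φ)
    (h : ComplementaryProjections P Q) {m m' : 𝒜} (hm : m ∈ skewAdjoint 𝒜)
    (hPm : P * m * P = 0) (hQm : Q * m * Q = 0) (hm' : m' ∈ skewAdjoint 𝒜)
    (hPm' : P * m' * P = 0) (hQm' : Q * m' * Q = 0) : Φ (m + m') = Φ m + Φ m' := by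
  have hX : Φ (P + -(Q * m' * P)) = Φ P + Φ (-(Q * m' * P)) :=
    hΦ.map_add_of_mul_eq_zero h (by simp [h.relations]) (by simp [h.relations, mul_assoc])
  have hY : Φ (P * m * Q + Q) = Φ (P * m * Q) + Φ Q :=
    hΦ.map_add_of_mul_eq_zero h (by simp [h.relations, mul_assoc]) (by simp [h.relations])
  have hmQP := h.eq_add_of_corners_eq_zero hPm hQm
  have hm'QP := h.eq_add_of_corners_eq_zero hPm' hQm'
  simp only [mul_assoc] at hPm hQm hPm' hQm' hmQP hm'QP
  have hprod : (P + -(Q * m' * P)) ⋄ (P * m * Q + Q) = m + m' := by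
    conv_rhs => rw [hmQP, hm'QP]
    simp [diamond, star_mul, skewAdjoint.mem_iff.mp hm, skewAdjoint.mem_iff.mp hm', h.relations,
      mul_add, add_mul, mul_assoc]
    abel
  have h11 : P ⋄ (P * m * Q) = m := by
    conv_rhs => rw [hmQP]
    simp [diamond, star_mul, skewAdjoint.mem_iff.mp hm, h.relations, mul_assoc]
  have h12 : P ⋄ Q = 0 := by simp [diamond, h.relations]
  have h21 : (-(Q * m' * P)) ⋄ (P * m * Q) = 0 := by
    simp [diamond, star_mul, h.relations, mul_assoc]
  have h22 : (-(Q * m' * P)) ⋄ Q = m' := by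
    conv_rhs => rw [hm'QP]
    simp [diamond, star_mul, skewAdjoint.mem_iff.mp hm', h.relations, mul_assoc]
  rw [← hprod, hΦ.map_diamond_add_add hX hY, h11, h12, h21, h22, hΦ.map_zero, add_zero, add_zero]

theorem map_corner_add (hΦ : IsDiamondDerivation Φ) (hprime : IsPrimeRing 𝒜)
    (h : ComplementaryProjections P Q) (hQ : Q ≠ 0) (hstar : ∀ A, Φ (star A) = star (Φ A))
    (a : 𝒜) {x : 𝒜} (hx : P * x * P = 0) : Φ (P * a * P + x) = Φ (P * a * P) + Φ x := by
  have hQT := hΦ.star_mul_map_add_sub_eq_zero x (C := Q) (a := P * a * P)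
    (by simp [h.relations, mul_assoc])
  rw [h.star_right] at hQT
  have hTQ := hΦ.map_add_sub_mul_eq_zero hstar x (C := Q) (a := P * a * P)
    (by simp [h.relations, mul_assoc])
  rw [← sub_eq_zero, ← sub_sub]
  refine h.eq_zero_of_forall_diamond_mul_eq_zero hprime hQ hQT hTQ fun y => ?_
  rw [hΦ.diamond_map_add_sub]
  rw [mul_assoc] at hx
  have hv : ((P * y * Q) ⋄ x) * P = 0 := by
    simp [diamond, star_mul, h.relations, mul_assoc, sub_mul, hx]
  have := hΦ.map_add_sub_mul_eq_zero hstar ((P * y * Q) ⋄ (P * a * P)) hv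
  rwa [add_comm ((P * y * Q) ⋄ x), sub_right_comm] at this

theorem map_corner_add_corner (hΦ : IsDiamondDerivation Φ) (hprime : IsPrimeRing 𝒜)
    (h : ComplementaryProjections P Q) (hQ : Q ≠ 0) (hstar : ∀ A, Φ (star A) = star (Φ A))
    (a b : 𝒜) : Φ (P * a * P + P * b * P) = Φ (P * a * P) + Φ (P * b * P) := by
  have hQT := hΦ.star_mul_map_add_sub_eq_zero (P * b * P) (C := Q) (a := P * a * P)
    (by simp [h.relations, mul_assoc])
  rw [h.star_right] at hQT
  have hTQ := hΦ.map_add_sub_mul_eq_zero hstar (P * b * P) (C := Q) (a := P * a * P)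
    (by simp [h.relations, mul_assoc])
  rw [← sub_eq_zero, ← sub_sub]
  refine h.eq_zero_of_forall_diamond_mul_eq_zero hprime hQ hQT hTQ fun y => ?_
  have hcorners : ∀ c, P * ((P * y * Q) ⋄ (P * c * P)) * P = 0 ∧
      Q * ((P * y * Q) ⋄ (P * c * P)) * Q = 0 := fun c => by
    constructor <;> simp [diamond, star_mul, h.relations, mul_assoc, mul_sub]
  rw [hΦ.diamond_map_add_sub, hΦ.map_add_of_corners_eq_zero h (diamond_mem_skewAdjoint _ _)
    (hcorners a).1 (hcorners a).2 (diamond_mem_skewAdjoint _ _) (hcorners b).1 (hcorners b).2]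
  simp

theorem map_eq_add_corners_add (hΦ : IsDiamondDerivation Φ) (hprime : IsPrimeRing 𝒜)
    (h : ComplementaryProjections P Q) (hP : P ≠ 0) (hQ : Q ≠ 0)
    (hstar : ∀ A, Φ (star A) = star (Φ A)) (A : 𝒜) :
    Φ A = Φ (P * A * P) + Φ (Q * A * Q) + Φ (A - P * A * P - Q * A * Q) := by
  have hP' := hΦ.map_corner_add hprime h hQ hstar A (x := A - P * A * P)
    (by simp [h.relations, mul_assoc, mul_sub, sub_mul])
  have hQ' := hΦ.map_corner_add hprime h.symm hP hstar A (x := A - P * A * P - Q * A * Q)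
    (by simp [h.relations, mul_assoc, mul_sub, sub_mul])
  rw [add_sub_cancel] at hP' hQ'
  rw [hP', hQ', add_assoc]

theorem map_add_of_mem_skewAdjoint (hΦ : IsDiamondDerivation Φ) (hprime : IsPrimeRing 𝒜)
    (h : ComplementaryProjections P Q) (hP : P ≠ 0) (hQ : Q ≠ 0)
    (hstar : ∀ A, Φ (star A) = star (Φ A)) {K L : 𝒜} (hK : K ∈ skewAdjoint 𝒜)
    (hL : L ∈ skewAdjoint 𝒜) : Φ (K + L) = Φ K + Φ L := by
  have hoff : ∀ {K : 𝒜}, K ∈ skewAdjoint 𝒜 → (K - P * K * P - Q * K * Q) ∈ skewAdjoint 𝒜 ∧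
      P * (K - P * K * P - Q * K * Q) * P = 0 ∧ Q * (K - P * K * P - Q * K * Q) * Q = 0 :=
    fun hK => ⟨by simp [skewAdjoint.mem_iff.mp hK, skewAdjoint.mem_iff, star_mul, h.relations,
      mul_assoc]; abel, by simp [h.relations, mul_assoc, mul_sub, sub_mul],
      by simp [h.relations, mul_assoc, mul_sub, sub_mul]⟩
  have hsplit : K + L - P * (K + L) * P - Q * (K + L) * Q =
      (K - P * K * P - Q * K * Q) + (L - P * L * P - Q * L * Q) := by
    simp only [mul_add, add_mul]; abel
  rw [hΦ.map_eq_add_corners_add hprime h hP hQ hstar (K + L), hsplit,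
    hΦ.map_add_of_corners_eq_zero h (hoff hK).1 (hoff hK).2.1 (hoff hK).2.2 (hoff hL).1
      (hoff hL).2.1 (hoff hL).2.2, mul_add, add_mul, mul_add, add_mul,
    hΦ.map_corner_add_corner hprime h hQ hstar, hΦ.map_corner_add_corner hprime h.symm hP hstar,
    hΦ.map_eq_add_corners_add hprime h hP hQ hstar K,
    hΦ.map_eq_add_corners_add hprime h hP hQ hstar L]
  abel

theorem map_add_of_map_add_skewAdjoint (hΦ : IsDiamondDerivation Φ)
    (hω : Φ ((2⁻¹ : ℂ) • 1) = 0) (hγ : Φ ((I / 2) • 1) = 0)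
    (hskew : ∀ K L, K ∈ skewAdjoint 𝒜 → L ∈ skewAdjoint 𝒜 → Φ (K + L) = Φ K + Φ L)
    (A B : 𝒜) : Φ (A + B) = Φ A + Φ B := by
  have hsa : ∀ S S' : 𝒜, IsSelfAdjoint S → IsSelfAdjoint S' → Φ (S + S') = Φ S + Φ S' := by
    intro S S' hS hS'
    apply smul_right_injective 𝒜 I_ne_zero
    simp only [smul_add, ← hΦ.map_I_smul hω hγ]
    exact hskew _ _ (hS.smul_mem_skewAdjoint I_mem_skewAdjoint)
      (hS'.smul_mem_skewAdjoint I_mem_skewAdjoint)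
  have hsa_part : (2⁻¹ : ℂ) • (A + B + star (A + B)) =
      (2⁻¹ : ℂ) • (A + star A) + (2⁻¹ : ℂ) • (B + star B) := by rw [star_add]; module
  have hskew_part : (2⁻¹ : ℂ) • (A + B - star (A + B)) =
      (2⁻¹ : ℂ) • (A - star A) + (2⁻¹ : ℂ) • (B - star B) := by rw [star_add]; module
  rw [hΦ.map_eq_map_half_add_star_add_map_half_sub_star hω hγ (A + B), hsa_part, hskew_part,
    hsa _ _ (isSelfAdjoint_half_smul_add_star A) (isSelfAdjoint_half_smul_add_star B),
    hskew _ _ (half_smul_sub_star_mem_skewAdjoint A) (half_smul_sub_star_mem_skewAdjoint B),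
    hΦ.map_eq_map_half_add_star_add_map_half_sub_star hω hγ A,
    hΦ.map_eq_map_half_add_star_add_map_half_sub_star hω hγ B]
  abel

theorem map_mul (hΦ : IsDiamondDerivation Φ) (hω : Φ ((2⁻¹ : ℂ) • 1) = 0)
    (hγ : Φ ((I / 2) • 1) = 0) (hadd : ∀ A B, Φ (A + B) = Φ A + Φ B) (A B : 𝒜) :
    Φ (A * B) = Φ A * B + A * Φ B := by
  have hskew : Φ (A * B - star (A * B)) =
      Φ A * B + A * Φ B - star (Φ A * B + A * Φ B) := by
    rw [← star_diamond, hΦ, hΦ.map_star hω hγ, star_diamond, star_diamond, star_add]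
    abel
  have hsa : Φ (A * B + star (A * B)) = Φ A * B + A * Φ B + star (Φ A * B + A * Φ B) := by
    apply smul_right_injective 𝒜 I_ne_zero
    dsimp only
    rw [← hΦ.map_I_smul hω hγ, ← star_diamond_I_smul, hΦ, hΦ.map_star hω hγ,
      hΦ.map_I_smul hω hγ, star_diamond_I_smul, star_diamond_I_smul, star_add]
    module
  have htwo : Φ (A * B) + Φ (A * B) = (Φ A * B + A * Φ B) + (Φ A * B + A * Φ B) := by
    rw [← hadd, show A * B + A * B = (A * B - star (A * B)) + (A * B + star (A * B)) by abel,
      hadd, hskew, hsa]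
    abel
  rw [← two_smul ℂ, ← two_smul ℂ] at htwo
  exact smul_right_injective 𝒜 two_ne_zero htwo

end IsDiamondDerivation

end ComplexStarAlgebra

/-- Let `𝒜` be a prime unital ∗-algebra over `ℂ` containing a nontrivial
projection `P₁`, and let `Φ : 𝒜 → 𝒜` be a nonlinear `⋄`-derivation
(`Φ(A ⋄ B) = Φ(A) ⋄ B + A ⋄ Φ(B)` where `A ⋄ B = A*B − B*A`) such that `Φ(I/2)` and
`Φ(iI/2)` are self-adjoint.  Then `Φ` is an additive ∗-derivation. -/
theorem stmt0 {𝒜 : Type*} [Ring 𝒜] [Algebra ℂ 𝒜] [StarRing 𝒜] [StarModule ℂ 𝒜]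
    (hprime : ∀ a b : 𝒜, (∀ x : 𝒜, a * x * b = 0) → a = 0 ∨ b = 0)
    (P₁ : 𝒜) (hP₁star : star P₁ = P₁) (hP₁idem : P₁ * P₁ = P₁)
    (hP₁ne0 : P₁ ≠ 0) (hP₁ne1 : P₁ ≠ 1)
    (Φ : 𝒜 → 𝒜)
    (hΦ : ∀ A B : 𝒜, Φ (star A * B - star B * A) =
      (star (Φ A) * B - star B * Φ A) + (star A * Φ B - star (Φ B) * A))
    (h1 : star (Φ (((1 : ℂ)/2) • (1 : 𝒜))) = Φ (((1 : ℂ)/2) • (1 : 𝒜)))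
    (h2 : star (Φ ((Complex.I/2) • (1 : 𝒜))) = Φ ((Complex.I/2) • (1 : 𝒜))) :
    (∀ A B : 𝒜, Φ (A + B) = Φ A + Φ B) ∧
    (∀ A B : 𝒜, Φ (A * B) = Φ A * B + A * Φ B) ∧
    (∀ A : 𝒜, Φ (star A) = star (Φ A)) := by
  have hΦ' : IsDiamondDerivation Φ := hΦ
  have hω : Φ ((2⁻¹ : ℂ) • 1) = 0 := hΦ'.map_half_smul_one_eq_zero (by rwa [← one_div])
  have hγ := hΦ'.map_I_half_smul_one_eq_zero h2
  have hstar := hΦ'.map_star hω hγ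
  have hP := ComplementaryProjections.of_isStarProjection ⟨hP₁idem, hP₁star⟩
  have hadd := hΦ'.map_add_of_map_add_skewAdjoint hω hγ fun _ _ hK hL =>
    hΦ'.map_add_of_mem_skewAdjoint hprime hP hP₁ne0 (sub_ne_zero.2 hP₁ne1.symm) hstar hK hL
  exact ⟨hadd, hΦ'.map_mul hω hγ hadd, hstar⟩
end

section
/- Let 𝒜 be a unital ∗-algebra over ℂ and let Φ : 𝒜 → 𝒜 be a nonlinear ⋄-derivation such that Φ(I/2) and Φ(iI/2) are self-adjoint. Then Φ(iI/2) = Φ(I/2) = Φ(−iI/2) = 0. -/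
/-! With `P = I/2` and `Q = iI/2` one has `P ⋄ Q = Q` and `Q ⋄ P = -Q`, while for self-adjoint
`T` the products `T ⋄ (cI) = (c - c̄) T` and `(cI) ⋄ T = (c̄ - c) T` are scalar multiples of `T`.
The derivation rule on `P ⋄ Q` thus gives `Φ(Q) = i Φ(P)`; as `Φ(P)` and `Φ(Q)` are both
self-adjoint this forces `Φ(P) = Φ(Q) = 0`, and the rule on `Q ⋄ P` then gives `Φ(-Q) = 0`. -/

section DiamondScalars

variable {R 𝒜 : Type*} [CommRing R] [StarRing R] [Ring 𝒜] [StarRing 𝒜] [Algebra R 𝒜]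
  [StarModule R 𝒜]

theorem star_smul_one_mul_smul_one_sub (c d : R) :
    star (c • (1 : 𝒜)) * (d • 1) - star (d • (1 : 𝒜)) * (c • 1) =
      (star c * d - star d * c) • (1 : 𝒜) := by
  simp only [star_smul, star_one, smul_mul_smul_comm, one_mul, sub_smul]

theorem IsSelfAdjoint.star_mul_smul_one_sub {T : 𝒜} (hT : IsSelfAdjoint T) (c : R) :
    star T * (c • 1) - star (c • (1 : 𝒜)) * T = (c - star c) • T := by
  rw [hT.star_eq, star_smul, star_one, mul_smul_one, smul_one_mul, sub_smul]

theorem IsSelfAdjoint.star_smul_one_mul_sub {T : 𝒜} (hT : IsSelfAdjoint T) (c : R) :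
    star (c • (1 : 𝒜)) * T - star T * (c • 1) = (star c - c) • T := by
  rw [hT.star_eq, star_smul, star_one, mul_smul_one, smul_one_mul, sub_smul]

end DiamondScalars

theorem IsSelfAdjoint.eq_zero_of_isSelfAdjoint_I_smul {𝒜 : Type*} [AddCommGroup 𝒜]
    [Module ℂ 𝒜] [StarAddMonoid 𝒜] [StarModule ℂ 𝒜] {T : 𝒜} (hT : IsSelfAdjoint T)
    (hIT : IsSelfAdjoint (Complex.I • T)) : T = 0 := by
  have h : Complex.I • T = -(Complex.I • T) := by
    conv_lhs =>
      rw [← hIT.star_eq, star_smul, hT.star_eq, Complex.star_def, Complex.conj_I, neg_smul]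
  have h2 : (2 * Complex.I) • T = 0 := by
    rw [mul_smul, two_smul]
    exact add_eq_zero_iff_eq_neg.mpr h
  exact (smul_eq_zero.mp h2).resolve_left (mul_ne_zero two_ne_zero Complex.I_ne_zero)

/-- If `Φ` is a nonlinear `⋄`-derivation on a unital ∗-algebra over `ℂ`
with `Φ(I/2)` and `Φ(iI/2)` self-adjoint, then `Φ(iI/2) = Φ(I/2) = Φ(−iI/2) = 0`. -/
theorem stmt1 {𝒜 : Type*} [Ring 𝒜] [Algebra ℂ 𝒜] [StarRing 𝒜] [StarModule ℂ 𝒜]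
    (Φ : 𝒜 → 𝒜)
    (hΦ : ∀ A B : 𝒜, Φ (star A * B - star B * A) =
      (star (Φ A) * B - star B * Φ A) + (star A * Φ B - star (Φ B) * A))
    (h1 : star (Φ (((1 : ℂ)/2) • (1 : 𝒜))) = Φ (((1 : ℂ)/2) • (1 : 𝒜)))
    (h2 : star (Φ ((Complex.I/2) • (1 : 𝒜))) = Φ ((Complex.I/2) • (1 : 𝒜))) :
    Φ ((Complex.I/2) • (1 : 𝒜)) = 0 ∧ Φ (((1 : ℂ)/2) • (1 : 𝒜)) = 0 ∧
      Φ ((-(Complex.I)/2) • (1 : 𝒜)) = 0 := by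
  have hP : IsSelfAdjoint (Φ (((1 : ℂ)/2) • (1 : 𝒜))) := h1
  have hQ : IsSelfAdjoint (Φ ((Complex.I/2) • (1 : 𝒜))) := h2
  have hQP : Φ ((Complex.I/2) • (1 : 𝒜)) = Complex.I • Φ (((1 : ℂ)/2) • (1 : 𝒜)) := by
    have h := hΦ (((1 : ℂ)/2) • 1) ((Complex.I/2) • 1)
    have coeff_PQ :
        star ((1 : ℂ)/2) * (Complex.I/2) - star (Complex.I/2) * (1/2) = Complex.I/2 := by
      simp [Complex.ext_iff]; norm_num
    have coeff_Q : Complex.I/2 - star (Complex.I/2) = Complex.I := by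
      simp [Complex.ext_iff]; norm_num
    have coeff_P : star ((1 : ℂ)/2) - 1/2 = 0 := by simp
    rwa [star_smul_one_mul_smul_one_sub, coeff_PQ, hP.star_mul_smul_one_sub, coeff_Q,
      hQ.star_smul_one_mul_sub, coeff_P, zero_smul, add_zero] at h
  have hP0 : Φ (((1 : ℂ)/2) • (1 : 𝒜)) = 0 :=
    hP.eq_zero_of_isSelfAdjoint_I_smul (hQP ▸ hQ)
  have hQ0 : Φ ((Complex.I/2) • (1 : 𝒜)) = 0 := by rw [hQP, hP0, smul_zero]
  refine ⟨hQ0, hP0, ?_⟩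
  have h := hΦ ((Complex.I/2) • 1) (((1 : ℂ)/2) • 1)
  have coeff_QP :
      star (Complex.I/2) * ((1 : ℂ)/2) - star (1/2) * (Complex.I/2) = -Complex.I/2 := by
    simp [Complex.ext_iff]; norm_num
  rw [star_smul_one_mul_smul_one_sub, coeff_QP, hQ0, hP0] at h
  simpa using h
end

section
/- Let 𝒜 be a prime unital ∗-algebra over ℂ containing a nontrivial projection P₁, let P₂ = I − P₁, and let Φ : 𝒜 → 𝒜 be a nonlinear ⋄-derivation such that Φ(I/2) and Φ(iI/2) are self-adjoint. Then for every A₁₁ ∈ 𝒜₁₁, A₁₂ ∈ 𝒜₁₂ and A₂₁ ∈ 𝒜₂₁ one has Φ(A₁₁ + A₁₂ + A₂₁) = Φ(A₁₁) + Φ(A₁₂) + Φ(A₂₁). -/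
/-!
Let `Q = 1 - P` and let `M = Φ(A₁₁ + A₁₂ + A₂₁) - Φ(A₁₁) - Φ(A₁₂) - Φ(A₂₁)`. Whenever
`X ⋄ A₂₁ = 0`, the derivation rule turns `X ⋄ M` into the two-term defect
`Φ(X ⋄ A₁₁ + X ⋄ A₁₂) - Φ(X ⋄ A₁₁) - Φ(X ⋄ A₁₂)`. For `X = Q w` the products with the
`P`-row elements `A₁₁`, `A₁₂` vanish, so `(Q w) ⋄ M = 0` for all `w`; testing `w = 1` and `w = i`
gives `Q M = 0`. For `X = P w Q` and `X = P w P` the two-term defect splits into pieces lying in a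
single row, to which the first step applies again; this yields `P M* P w Q = 0` and
`Q M* P w P = 0` for all `w`, and primeness gives `P M P = 0` and `P M Q = 0`.
-/

namespace DiamondDerivation

variable {𝒜 : Type*} [Ring 𝒜] [StarRing 𝒜]

def diamond (A B : 𝒜) : 𝒜 := star A * B - star B * A

infix:70 " ⋄ " => diamond

theorem diamond_add_right (X Y Z : 𝒜) : X ⋄ (Y + Z) = X ⋄ Y + X ⋄ Z := by
  simp only [diamond, mul_add, add_mul, star_add]; abel

theorem diamond_sub_right (X Y Z : 𝒜) : X ⋄ (Y - Z) = X ⋄ Y - X ⋄ Z := by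
  simp only [diamond, mul_sub, sub_mul, star_sub]; abel

theorem mul_diamond_eq_zero {Q A : 𝒜} (hQ : IsSelfAdjoint Q) (hQA : Q * A = 0) (w : 𝒜) :
    (Q * w) ⋄ A = 0 := by
  have hAQ : star A * Q = 0 := by simpa [star_mul, hQ.star_eq] using congr(star $hQA)
  simp only [diamond, star_mul, hQ.star_eq, mul_assoc, hQA, ← mul_assoc (star A), hAQ,
    mul_zero, zero_mul, sub_zero]

theorem mul_mul_eq_zero_of_forall_mul_diamond_eq_zero
    (hprime : ∀ a b : 𝒜, (∀ x : 𝒜, a * x * b = 0) → a = 0 ∨ b = 0)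
    {R S T M : 𝒜} (hR : IsSelfAdjoint R) (hS : IsSelfAdjoint S) (hT : IsSelfAdjoint T)
    (hRT : R * T = 0) (hT0 : T ≠ 0) (h : ∀ w, R * ((S * w * T) ⋄ M) = 0) :
    S * M * R = 0 := by
  have hRMS : R * star M * S = 0 := by
    refine (hprime _ T fun w => ?_).resolve_right hT0
    simpa only [diamond, star_mul, hS.star_eq, hT.star_eq, mul_sub, ← mul_assoc, hRT,
      zero_mul, zero_sub, neg_eq_zero] using h w
  simpa [star_mul, hR.star_eq, hS.star_eq, mul_assoc] using congr(star $hRMS)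

def IsDiamondDerivation (Φ : 𝒜 → 𝒜) : Prop :=
  ∀ A B : 𝒜, Φ (A ⋄ B) = Φ A ⋄ B + A ⋄ Φ B

namespace IsDiamondDerivation

variable {Φ : 𝒜 → 𝒜}

theorem map_zero (hΦ : IsDiamondDerivation Φ) : Φ 0 = 0 := by
  simpa [diamond] using hΦ 0 0

theorem diamond_map_add_add_sub (hΦ : IsDiamondDerivation Φ) {X A B C : 𝒜} (hXC : X ⋄ C = 0) :
    X ⋄ (Φ (A + B + C) - Φ A - Φ B - Φ C) = Φ (X ⋄ A + X ⋄ B) - Φ (X ⋄ A) - Φ (X ⋄ B) := by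
  have hABC := hΦ X (A + B + C)
  have hC := hΦ X C
  rw [hXC, hΦ.map_zero] at hC
  rw [diamond_add_right, diamond_add_right, hXC, add_zero] at hABC
  rw [diamond_sub_right, diamond_sub_right, diamond_sub_right, hABC, hΦ X A, hΦ X B,
    diamond_add_right, diamond_add_right, eq_neg_of_add_eq_zero_right hC.symm]
  abel

end IsDiamondDerivation

section Complex

variable [Algebra ℂ 𝒜] [StarModule ℂ 𝒜]

theorem mul_eq_zero_of_forall_mul_diamond_eq_zero {Q M : 𝒜} (hQ : IsSelfAdjoint Q)
    (h : ∀ w, (Q * w) ⋄ M = 0) : Q * M = 0 := by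
  have hsym : star M * Q = Q * M :=
    (sub_eq_zero.1 (by simpa [diamond, hQ.star_eq] using h 1)).symm
  have hI : (2 * Complex.I) • (Q * M) = 0 := by
    have := h (Complex.I • 1)
    simp only [diamond, mul_smul_comm, mul_one, star_smul, hQ.star_eq, smul_mul_assoc, hsym,
      Complex.star_def, Complex.conj_I] at this
    rw [← neg_eq_zero, ← this]
    module
  simpa using hI

namespace IsDiamondDerivation

variable {Φ : 𝒜 → 𝒜}

theorem mul_map_add_add_sub_eq_zero (hΦ : IsDiamondDerivation Φ) {Q A B : 𝒜}
    (hQ : IsSelfAdjoint Q) (hA : Q * A = 0) (hB : Q * B = 0) (C : 𝒜) :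
    Q * (Φ (A + B + C) - Φ A - Φ B - Φ C) = 0 := by
  refine mul_eq_zero_of_forall_mul_diamond_eq_zero hQ fun w => ?_
  have hperm : Φ (A + B + C) - Φ A - Φ B - Φ C = Φ (C + B + A) - Φ C - Φ B - Φ A := by
    rw [add_comm C, add_right_comm B, add_comm B]
    abel
  rw [hperm, hΦ.diamond_map_add_add_sub (mul_diamond_eq_zero hQ hA w),
    mul_diamond_eq_zero hQ hB, add_zero, hΦ.map_zero, sub_self, sub_zero]

theorem map_add_of_mul_eq_zero (hΦ : IsDiamondDerivation Φ) {P A C : 𝒜} (hP : IsSelfAdjoint P)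
    (hA : (1 - P) * A = 0) (hC : P * C = 0) : Φ (A + C) = Φ A + Φ C := by
  have h₁ := hΦ.mul_map_add_add_sub_eq_zero ((IsSelfAdjoint.one 𝒜).sub hP) hA (mul_zero _) C
  have h₂ := hΦ.mul_map_add_add_sub_eq_zero hP hC (mul_zero _) A
  rw [add_zero, hΦ.map_zero, sub_zero] at h₁ h₂
  rw [add_comm C, sub_right_comm] at h₂
  rw [← sub_eq_zero, ← sub_sub]
  calc Φ (A + C) - Φ A - Φ C
      = (1 - P) * (Φ (A + C) - Φ A - Φ C) + P * (Φ (A + C) - Φ A - Φ C) := by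
        rw [← add_mul, sub_add_cancel, one_mul]
    _ = 0 := by rw [h₁, h₂, add_zero]

theorem mul_map_add_add_sub_map_add_eq_zero (hΦ : IsDiamondDerivation Φ) {R s r₁ r₂ : 𝒜}
    (hR : IsSelfAdjoint R) (hs : (1 - R) * s = 0) (hr₁ : R * r₁ = 0) (hr₂ : R * r₂ = 0) :
    R * (Φ (s + r₁ + r₂) - Φ (s + r₁) - Φ r₂) = 0 := by
  have h := hΦ.mul_map_add_add_sub_eq_zero hR hr₁ hr₂ s
  rw [hΦ.map_add_of_mul_eq_zero hR hs hr₁, ← h]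
  congr 1
  rw [show s + r₁ + r₂ = r₁ + r₂ + s by abel]
  abel

theorem mul_map_add_add_sub_mul_self (hΦ : IsDiamondDerivation Φ)
    (hprime : ∀ a b : 𝒜, (∀ x : 𝒜, a * x * b = 0) → a = 0 ∨ b = 0)
    {P A B C : 𝒜} (hP : IsStarProjection P) (hP1 : P ≠ 1)
    (hA : A * (1 - P) = 0) (hB : B * P = 0) (hC : P * C = 0) :
    P * (Φ (A + B + C) - Φ A - Φ B - Φ C) * P = 0 := by
  have hQ : IsStarProjection (1 - P) := hP.one_sub
  refine mul_mul_eq_zero_of_forall_mul_diamond_eq_zero hprime hP.isSelfAdjoint hP.isSelfAdjoint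
    hQ.isSelfAdjoint hP.mul_one_sub_self (sub_ne_zero.2 hP1.symm) fun w => ?_
  set X := P * w * (1 - P) with hX
  have hXC : X ⋄ C = 0 := by
    rw [hX, mul_assoc]
    exact mul_diamond_eq_zero hP.isSelfAdjoint hC _
  have hPX : P * star X = 0 := by
    rw [hX, star_mul, star_mul, hP.isSelfAdjoint.star_eq, hQ.isSelfAdjoint.star_eq,
      ← mul_assoc, ← mul_assoc, hP.mul_one_sub_self, zero_mul, zero_mul]
  have hQA : (1 - P) * star A = 0 := by
    simpa [star_mul, hQ.isSelfAdjoint.star_eq] using congr(star $hA)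
  have hPB : P * star B = 0 := by
    simpa [star_mul, hP.isSelfAdjoint.star_eq] using congr(star $hB)
  have hXA : X ⋄ A = -(star A * X) + star X * A := by
    rw [diamond]
    abel
  rw [hΦ.diamond_map_add_add_sub hXC, hXA]
  refine hΦ.mul_map_add_add_sub_map_add_eq_zero hP.isSelfAdjoint ?_ ?_ ?_
  · rw [mul_neg, ← mul_assoc, hQA, zero_mul, neg_zero]
  · rw [← mul_assoc, hPX, zero_mul]
  · rw [diamond, mul_sub, ← mul_assoc, ← mul_assoc, hPX, hPB, zero_mul, zero_mul, sub_zero]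

theorem mul_map_add_add_sub_mul_one_sub (hΦ : IsDiamondDerivation Φ)
    (hprime : ∀ a b : 𝒜, (∀ x : 𝒜, a * x * b = 0) → a = 0 ∨ b = 0)
    {P A B C : 𝒜} (hP : IsStarProjection P) (hP0 : P ≠ 0)
    (hA : A * (1 - P) = 0) (hB : B * P = 0) (hC : P * C = 0) :
    P * (Φ (A + B + C) - Φ A - Φ B - Φ C) * (1 - P) = 0 := by
  have hQ : IsStarProjection (1 - P) := hP.one_sub
  refine mul_mul_eq_zero_of_forall_mul_diamond_eq_zero hprime hQ.isSelfAdjoint hP.isSelfAdjoint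
    hP.isSelfAdjoint hP.one_sub_mul_self hP0 fun w => ?_
  set X := P * w * P with hX
  have hXC : X ⋄ C = 0 := by
    rw [hX, mul_assoc]
    exact mul_diamond_eq_zero hP.isSelfAdjoint hC _
  have hQX : (1 - P) * star X = 0 := by
    rw [hX, star_mul, star_mul, hP.isSelfAdjoint.star_eq,
      ← mul_assoc, ← mul_assoc, hP.one_sub_mul_self, zero_mul, zero_mul]
  have hQA : (1 - P) * star A = 0 := by
    simpa [star_mul, hQ.isSelfAdjoint.star_eq] using congr(star $hA)
  have hPB : P * star B = 0 := by
    simpa [star_mul, hP.isSelfAdjoint.star_eq] using congr(star $hB)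
  have hXB : X ⋄ B = -(star B * X) + star X * B := by
    rw [diamond]
    abel
  rw [hΦ.diamond_map_add_add_sub hXC, add_comm (X ⋄ A), sub_right_comm, hXB]
  refine hΦ.mul_map_add_add_sub_map_add_eq_zero hQ.isSelfAdjoint ?_ ?_ ?_
  · rw [sub_sub_cancel, mul_neg, ← mul_assoc, hPB, zero_mul, neg_zero]
  · rw [← mul_assoc, hQX, zero_mul]
  · rw [diamond, mul_sub, ← mul_assoc, ← mul_assoc, hQX, hQA, zero_mul, zero_mul, sub_zero]

theorem map_add_add (hΦ : IsDiamondDerivation Φ)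
    (hprime : ∀ a b : 𝒜, (∀ x : 𝒜, a * x * b = 0) → a = 0 ∨ b = 0)
    {P A B C : 𝒜} (hP : IsStarProjection P) (hP0 : P ≠ 0) (hP1 : P ≠ 1)
    (hA₁ : (1 - P) * A = 0) (hA₂ : A * (1 - P) = 0) (hB₁ : (1 - P) * B = 0) (hB₂ : B * P = 0)
    (hC : P * C = 0) :
    Φ (A + B + C) = Φ A + Φ B + Φ C := by
  have h₁₁ := hΦ.mul_map_add_add_sub_mul_self hprime hP hP1 hA₂ hB₂ hC
  have h₁₂ := hΦ.mul_map_add_add_sub_mul_one_sub hprime hP hP0 hA₂ hB₂ hC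
  have h₂ := hΦ.mul_map_add_add_sub_eq_zero hP.one_sub.isSelfAdjoint hA₁ hB₁ C
  rw [← sub_eq_zero, ← sub_sub, ← sub_sub]
  generalize Φ (A + B + C) - Φ A - Φ B - Φ C = M at h₁₁ h₁₂ h₂ ⊢
  calc M = P * M * P + P * M * (1 - P) + (1 - P) * M := by noncomm_ring
    _ = 0 := by rw [h₁₁, h₁₂, h₂, add_zero, add_zero]

end IsDiamondDerivation

end Complex

end DiamondDerivation

open DiamondDerivation

theorem stmt6_general {𝒜 : Type*} [Ring 𝒜] [Algebra ℂ 𝒜] [StarRing 𝒜] [StarModule ℂ 𝒜]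
    (hprime : ∀ a b : 𝒜, (∀ x : 𝒜, a * x * b = 0) → a = 0 ∨ b = 0)
    (P₁ : 𝒜) (hP₁star : star P₁ = P₁) (hP₁idem : P₁ * P₁ = P₁)
    (hP₁ne0 : P₁ ≠ 0) (hP₁ne1 : P₁ ≠ 1)
    (Φ : 𝒜 → 𝒜)
    (hΦ : ∀ A B : 𝒜, Φ (star A * B - star B * A) =
      (star (Φ A) * B - star B * Φ A) + (star A * Φ B - star (Φ B) * A)) :
    ∀ A₁₁ A₁₂ A₂₁ : 𝒜, (∃ x : 𝒜, A₁₁ = P₁ * x * P₁) →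
      (∃ x : 𝒜, A₁₂ = P₁ * x * (1 - P₁)) →
      (∃ x : 𝒜, A₂₁ = (1 - P₁) * x * P₁) →
      Φ (A₁₁ + A₁₂ + A₂₁) = Φ A₁₁ + Φ A₁₂ + Φ A₂₁ := by
  have hP : IsStarProjection P₁ := ⟨hP₁idem, hP₁star⟩
  rintro _ _ _ ⟨x, rfl⟩ ⟨y, rfl⟩ ⟨z, rfl⟩
  refine IsDiamondDerivation.map_add_add hΦ hprime hP hP₁ne0 hP₁ne1 ?_ ?_ ?_ ?_ ?_
  · rw [← mul_assoc, ← mul_assoc, hP.one_sub_mul_self, zero_mul, zero_mul]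
  · rw [mul_assoc, hP.mul_one_sub_self, mul_zero]
  · rw [← mul_assoc, ← mul_assoc, hP.one_sub_mul_self, zero_mul, zero_mul]
  · rw [mul_assoc, hP.one_sub_mul_self, mul_zero]
  · rw [← mul_assoc, ← mul_assoc, hP.mul_one_sub_self, zero_mul, zero_mul]

/-- In a prime unital ∗-algebra over `ℂ` with nontrivial projection `P₁`
and `P₂ = I − P₁`, a nonlinear `⋄`-derivation `Φ` with `Φ(I/2)`, `Φ(iI/2)` self-adjoint
satisfies `Φ(A₁₁ + A₁₂ + A₂₁) = Φ(A₁₁) + Φ(A₁₂) + Φ(A₂₁)`. -/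
theorem stmt6 {𝒜 : Type*} [Ring 𝒜] [Algebra ℂ 𝒜] [StarRing 𝒜] [StarModule ℂ 𝒜]
    (hprime : ∀ a b : 𝒜, (∀ x : 𝒜, a * x * b = 0) → a = 0 ∨ b = 0)
    (P₁ : 𝒜) (hP₁star : star P₁ = P₁) (hP₁idem : P₁ * P₁ = P₁)
    (hP₁ne0 : P₁ ≠ 0) (hP₁ne1 : P₁ ≠ 1)
    (Φ : 𝒜 → 𝒜)
    (hΦ : ∀ A B : 𝒜, Φ (star A * B - star B * A) =
      (star (Φ A) * B - star B * Φ A) + (star A * Φ B - star (Φ B) * A))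
    (h1 : star (Φ (((1 : ℂ)/2) • (1 : 𝒜))) = Φ (((1 : ℂ)/2) • (1 : 𝒜)))
    (h2 : star (Φ ((Complex.I/2) • (1 : 𝒜))) = Φ ((Complex.I/2) • (1 : 𝒜))) :
    ∀ A₁₁ A₁₂ A₂₁ : 𝒜, (∃ x : 𝒜, A₁₁ = P₁ * x * P₁) →
      (∃ x : 𝒜, A₁₂ = P₁ * x * (1 - P₁)) →
      (∃ x : 𝒜, A₂₁ = (1 - P₁) * x * P₁) →
      Φ (A₁₁ + A₁₂ + A₂₁) = Φ A₁₁ + Φ A₁₂ + Φ A₂₁ :=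
  stmt6_general hprime P₁ hP₁star hP₁idem hP₁ne0 hP₁ne1 Φ hΦ
end
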